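/- (Square root with nonnegative spectrum of AB + cI.) Let n be a finite index type, let A be an n×n real positive definite matrix, B an n×n real positive semidefinite matrix, and c ≥ 0. Let A^{1/2} denote the positive semidefinite square root of A and let K := (A^{1/2}·B·A^{1/2} + c·I)^{1/2} denote the positive semidefinite square root of A^{1/2}·B·A^{1/2} + c·I (which is positive semidefinite). Define M := A^{1/2}·K·(A^{1/2})⁻¹. Then (i) M·M = A·B + c·I, and (ii) the real spectrum of M is contained in [0, ∞). -/

import Mathlib

/-! `K² = A^{1/2}·B·A^{1/2} + c·I`, so conjugating by the invertible `A^{1/2}` gives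
`M² = A^{1/2}·(A^{1/2}·B·A^{1/2} + c·I)·A^{-1/2} = A·B + c·I`. Being similar to the positive
semidefinite `K`, `M` has the spectrum of `K`, which is nonnegative. -/

open Matrix

namespace Matrix.PosSemidef

open scoped ComplexOrder

/-- The positive semidefinite square root of a positive semidefinite matrix
(the definition removed from Mathlib, restored with its old value). -/
noncomputable def sqrt {n : Type*} [Fintype n] [DecidableEq n] {𝕜 : Type*} [RCLike 𝕜]
    {A : Matrix n n 𝕜} (hA : A.PosSemidef) : Matrix n n 𝕜 :=
  hA.1.eigenvectorUnitary.1 * diagonal ((↑) ∘ (√·) ∘ hA.1.eigenvalues) *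
    (star hA.1.eigenvectorUnitary : Matrix n n 𝕜)

end Matrix.PosSemidef

open scoped ComplexOrder MatrixOrder

namespace Matrix

section Sqrt

variable {n 𝕜 : Type*} [Fintype n] [DecidableEq n] [RCLike 𝕜] {A : Matrix n n 𝕜}

theorem PosSemidef.sqrt_eq_cfcSqrt (hA : A.PosSemidef) : hA.sqrt = CFC.sqrt A := by
  rw [CFC.sqrt_eq_cfc, cfc_nnreal_eq_real _ A, hA.1.cfc_eq, IsHermitian.cfc,
    Unitary.conjStarAlgAut_apply, PosSemidef.sqrt]
  congr 3
  ext i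
  simp [hA.eigenvalues_nonneg i]

theorem PosSemidef.posSemidef_sqrt (hA : A.PosSemidef) : hA.sqrt.PosSemidef :=
  hA.sqrt_eq_cfcSqrt ▸ (CFC.sqrt_nonneg A).posSemidef

theorem PosSemidef.sqrt_mul_self (hA : A.PosSemidef) : hA.sqrt * hA.sqrt = A := by
  rw [hA.sqrt_eq_cfcSqrt, CFC.sqrt_mul_sqrt_self A hA.nonneg]

theorem PosDef.isUnit_sqrt (hA : A.PosDef) : IsUnit hA.posSemidef.sqrt :=
  isUnit_of_mul_isUnit_left (hA.posSemidef.sqrt_mul_self ▸ hA.isUnit)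

end Sqrt

section Conjugate

variable {n R : Type*} [Fintype n] [DecidableEq n] [CommRing R] {P : Matrix n n R}

theorem conjugate_mul_conjugate (hP : IsUnit P) (K L : Matrix n n R) :
    P * K * P⁻¹ * (P * L * P⁻¹) = P * (K * L) * P⁻¹ := by
  simp only [Matrix.mul_assoc, nonsing_inv_mul_cancel_left _ _ ((isUnit_iff_isUnit_det P).mp hP)]

theorem spectrum_conjugate {S : Type*} [CommSemiring S] [Algebra S (Matrix n n R)]
    (hP : IsUnit P) (K : Matrix n n R) : spectrum S (P * K * P⁻¹) = spectrum S K := by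
  lift P to (Matrix n n R)ˣ using hP
  rw [← coe_units_inv, spectrum.units_conjugate]

end Conjugate

end Matrix

theorem stmt15 {n : Type*} [Fintype n] [DecidableEq n]
    (A B : Matrix n n ℝ) (c : ℝ) (hA : A.PosDef) (hB : B.PosSemidef) (hc : 0 ≤ c) :
    ∃ hS : (hA.posSemidef.sqrt * B * hA.posSemidef.sqrt + c • (1 : Matrix n n ℝ)).PosSemidef,
      (hA.posSemidef.sqrt * hS.sqrt * hA.posSemidef.sqrt⁻¹) *
          (hA.posSemidef.sqrt * hS.sqrt * hA.posSemidef.sqrt⁻¹) = A * B + c • 1 ∧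
      spectrum ℝ (hA.posSemidef.sqrt * hS.sqrt * hA.posSemidef.sqrt⁻¹) ⊆ Set.Ici 0 := by
  set R := hA.posSemidef.sqrt
  have hR : IsUnit R := hA.isUnit_sqrt
  have hS : (R * B * R + c • (1 : Matrix n n ℝ)).PosSemidef :=
    (hA.posSemidef.posSemidef_sqrt.isHermitian.eq ▸ hB.mul_mul_conjTranspose_same R).add
      (PosSemidef.one.smul hc)
  refine ⟨hS, ?_, fun x hx => ?_⟩
  · have hdet : IsUnit R.det := (isUnit_iff_isUnit_det R).mp hR
    rw [conjugate_mul_conjugate hR, hS.sqrt_mul_self, ← hA.posSemidef.sqrt_mul_self]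
    simp [Matrix.mul_add, Matrix.add_mul, Matrix.mul_assoc, mul_nonsing_inv _ hdet, R]
  · rw [spectrum_conjugate hR] at hx
    exact spectrum_nonneg_of_nonneg hS.posSemidef_sqrt.nonneg hx
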